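/- arXiv:2307.09850 — 2 statements merged into one kernel-verified Lean document; each statement's English description precedes it below -/
import Mathlib

section
/- Let n be a nonnegative integer and let B be a Binomial(n, 1/2) random variable. Then E[B / (1 + n − B)] = 1 − 2^{−n}. Equivalently, Σ_{k=0}^{n} C(n,k)·2^{−n}·k/(1+n−k) = 1 − 2^{−n}; in particular this expectation is at most 1. -/
/-!
Absorption, `C(n, k+1)·(k+1) = C(n, k)·(n−k)`, turns the term `C(n,k+1)·(k+1)/(n−k)` into
`C(n, k)` and the `k = 0` term vanishes, so the weighted sum is `∑_{j<n} C(n, j) = 2^n − 1`;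
dividing by `2^n` gives `1 − 2^{−n}`.
-/

open Finset

set_option linter.deprecated false

theorem Nat.choose_succ_mul_div_sub_eq {K : Type*} [Field K] [CharZero K] {n k : ℕ} (hk : k < n) :
    (n.choose (k + 1) : K) * ((k + 1 : ℕ) / (1 + n - (k + 1 : ℕ))) = n.choose k := by
  have hnk : (n : K) - k ≠ 0 := sub_ne_zero.2 (Nat.cast_injective.ne hk.ne')
  have habs : (n.choose (k + 1) : K) * (k + 1) = n.choose k * (n - k) := by
    have := congrArg (Nat.cast (R := K)) (Nat.choose_succ_right_eq n k)
    push_cast [Nat.cast_sub hk.le] at this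
    exact this
  rw [show (1 + n - (k + 1 : ℕ) : K) = n - k by push_cast; ring]
  field_simp
  push_cast
  linear_combination habs

theorem Nat.sum_range_choose_mul_div_eq {K : Type*} [Field K] [CharZero K] (n : ℕ) :
    ∑ k ∈ range (n + 1), (n.choose k : K) * (k / (1 + n - k)) = 2 ^ n - 1 := by
  have hchoose : ∑ k ∈ range n, (n.choose k : K) + 1 = 2 ^ n := by
    have := Nat.sum_range_choose n
    rw [sum_range_succ, Nat.choose_self] at this
    exact_mod_cast this
  rw [sum_range_succ', sum_congr rfl fun k hk ↦ Nat.choose_succ_mul_div_sub_eq (mem_range.1 hk)]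
  simp [← hchoose]

theorem PMF.toReal_binomial_apply (p : NNReal) (h : p ≤ 1) (n : ℕ) (i : Fin (n + 1)) :
    (PMF.binomial p h n i).toReal = n.choose i * (p : ℝ) ^ (i : ℕ) * (1 - p) ^ (n - i) := by
  rw [PMF.binomial_apply, Fin.val_last, ENNReal.toReal_mul, ENNReal.toReal_mul,
    ENNReal.toReal_pow, ENNReal.toReal_pow, ENNReal.toReal_sub_of_le (by exact_mod_cast h) (by simp)]
  simp only [ENNReal.coe_toReal, ENNReal.toReal_one, ENNReal.toReal_natCast]
  ring

theorem PMF.toReal_binomial_half_apply (n : ℕ) (i : Fin (n + 1)) :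
    (PMF.binomial (1 / 2) (by norm_num) n i).toReal = n.choose i * (2 : ℝ) ^ (-(n : ℤ)) := by
  have hi : (i : ℕ) + (n - i) = n := Nat.add_sub_cancel' (Nat.lt_succ_iff.1 i.isLt)
  have hhalf : ((1 / 2 : NNReal) : ℝ) = 2⁻¹ := by norm_num
  rw [PMF.toReal_binomial_apply, hhalf, show (1 : ℝ) - 2⁻¹ = 2⁻¹ by norm_num, mul_assoc,
    ← pow_add, hi, zpow_neg, zpow_natCast, inv_pow]

/-- For `B ~ Binomial(n, 1/2)`, one has `E[B / (1 + n − B)] = 1 − 2^{−n}`: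
both in the form of an expectation against the binomial PMF and as the
explicit sum `Σ_{k=0}^n C(n,k)·2^{−n}·k/(1+n−k) = 1 − 2^{−n}`; in particular
the expectation is at most `1`. -/
theorem binomial_expectation_ratio (n : ℕ) :
    (∑ k : Fin (n + 1),
        ((PMF.binomial (1 / 2) (by norm_num) n) k).toReal *
          ((k : ℝ) / (1 + (n : ℝ) - (k : ℝ))) = 1 - (2 : ℝ) ^ (-(n : ℤ))) ∧
    (∑ k ∈ Finset.range (n + 1),
        (n.choose k : ℝ) * (2 : ℝ) ^ (-(n : ℤ)) * ((k : ℝ) / (1 + (n : ℝ) - (k : ℝ))) =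
      1 - (2 : ℝ) ^ (-(n : ℤ))) ∧
    (∑ k ∈ Finset.range (n + 1),
        (n.choose k : ℝ) * (2 : ℝ) ^ (-(n : ℤ)) * ((k : ℝ) / (1 + (n : ℝ) - (k : ℝ))) ≤ 1) := by
  have hsum : ∑ k ∈ range (n + 1),
      (n.choose k : ℝ) * (2 : ℝ) ^ (-(n : ℤ)) * ((k : ℝ) / (1 + (n : ℝ) - (k : ℝ))) =
      1 - (2 : ℝ) ^ (-(n : ℤ)) := by
    calc _ = (2 : ℝ) ^ (-(n : ℤ)) * ∑ k ∈ range (n + 1), (n.choose k : ℝ) * (k / (1 + n - k)) := by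
          rw [mul_sum]; exact sum_congr rfl fun _ _ ↦ by ring
      _ = 1 - (2 : ℝ) ^ (-(n : ℤ)) := by
          rw [Nat.sum_range_choose_mul_div_eq, zpow_neg, zpow_natCast]
          field_simp
  refine ⟨?_, hsum, hsum ▸ sub_le_self 1 (by positivity)⟩
  rw [sum_congr rfl fun k _ ↦ by rw [PMF.toReal_binomial_half_apply]]
  exact (Fin.sum_univ_eq_sum_range
    (fun k ↦ (n.choose k : ℝ) * 2 ^ (-(n : ℤ)) * (k / (1 + n - k))) (n + 1)).trans hsum
end

section
/- (Averaging preserves the sign-flip invariance needed by the BC procedure, with quantization.) Let W^{(1)}, …, W^{(N)} be independent random vectors in ℝ^{m'}, let j be a coordinate such that the law of every W^{(i)} is invariant under flip_j, and let q^{(i)} : ℝ^{m'} → [0,∞)^{m'} be measurable. Define W_q^{(i)} by (W_q^{(i)})_k = sgn(W_k^{(i)})·q^{(i)}(|W^{(i)}|)_k and W̄ = (1/N) Σ_{i=1}^N W_q^{(i)}. Then the law of W̄ is invariant under flip_j. -/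
/-!
Write `W̄ = G(W^{(1)}, …, W^{(N)})` for the deterministic averaging map `G`. Since
`sgn(-x) = -sgn x` and `|-x| = |x|`, flipping coordinate `j` of every argument of `G` flips
coordinate `j` of its value. By independence the joint law of the `W^{(i)}` is the product of
their laws, which is invariant under flipping coordinate `j` in every factor; pushing this
invariance forward along `G` gives the invariance of the law of `W̄`.
-/

open MeasureTheory ProbabilityTheory

/-- The sign-flip map on coordinate `j`: negates the `j`-th coordinate and
leaves the others unchanged. -/
def flipCoord {m : ℕ} (j : Fin m) (w : Fin m → ℝ) : Fin m → ℝ :=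
  fun i => if i = j then -w i else w i

@[fun_prop]
lemma Real.measurable_sign : Measurable Real.sign :=
  Measurable.ite measurableSet_Iio measurable_const
    (Measurable.ite measurableSet_Ioi measurable_const measurable_const)

section flipCoord

variable {m : ℕ} (j : Fin m)

@[simp]
lemma flipCoord_apply_self (w : Fin m → ℝ) : flipCoord j w j = -w j := if_pos rfl

@[simp]
lemma flipCoord_apply_of_ne {k : Fin m} (hk : k ≠ j) (w : Fin m → ℝ) :
    flipCoord j w k = w k := if_neg hk

@[fun_prop]
lemma measurable_flipCoord : Measurable (flipCoord j) :=
  measurable_pi_lambda _ fun k => by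
    by_cases hk : k = j
    · subst hk; simp only [flipCoord_apply_self]; fun_prop
    · simp only [flipCoord_apply_of_ne _ hk]; fun_prop

lemma abs_flipCoord (w : Fin m → ℝ) : (fun l => |flipCoord j w l|) = fun l => |w l| := by
  funext l
  by_cases hl : l = j
  · subst hl; simp
  · simp [hl]

end flipCoord

/-- The quantized statistic `W_q` of a vector `w`, for a quantizer `q` of its absolute values. -/
noncomputable def quantizedSign {m : ℕ} (q : (Fin m → ℝ) → Fin m → ℝ) (w : Fin m → ℝ) :
    Fin m → ℝ :=
  fun k => Real.sign (w k) * q (fun l => |w l|) k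

noncomputable def averageQuantizedSign {N m : ℕ} (q : Fin N → (Fin m → ℝ) → Fin m → ℝ)
    (w : Fin N → Fin m → ℝ) : Fin m → ℝ :=
  fun k => (N : ℝ)⁻¹ * ∑ i, quantizedSign (q i) (w i) k

lemma quantizedSign_flipCoord {m : ℕ} (j : Fin m) (q : (Fin m → ℝ) → Fin m → ℝ)
    (w : Fin m → ℝ) : quantizedSign q (flipCoord j w) = flipCoord j (quantizedSign q w) := by
  funext k
  by_cases hk : k = j
  · subst hk; simp [quantizedSign, abs_flipCoord, Real.sign_neg]
  · simp [quantizedSign, abs_flipCoord, hk]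

lemma averageQuantizedSign_flipCoord {N m : ℕ} (j : Fin m)
    (q : Fin N → (Fin m → ℝ) → Fin m → ℝ) (w : Fin N → Fin m → ℝ) :
    averageQuantizedSign q (fun i => flipCoord j (w i)) =
      flipCoord j (averageQuantizedSign q w) := by
  funext k
  by_cases hk : k = j
  · subst hk; simp [averageQuantizedSign, quantizedSign_flipCoord, Finset.sum_neg_distrib]
  · simp [averageQuantizedSign, quantizedSign_flipCoord, hk]

lemma measurable_averageQuantizedSign {N m : ℕ} {q : Fin N → (Fin m → ℝ) → Fin m → ℝ}
    (hq : ∀ i, Measurable (q i)) : Measurable (averageQuantizedSign q) := by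
  unfold averageQuantizedSign quantizedSign
  fun_prop

lemma MeasureTheory.Measure.pi_map_pi_eq_self {ι : Type*} [Fintype ι] {X : ι → Type*}
    [∀ i, MeasurableSpace (X i)] {μ : ∀ i, Measure (X i)} [∀ i, SigmaFinite (μ i)]
    {T : ∀ i, X i → X i} (hT : ∀ i, Measurable (T i)) (hμ : ∀ i, (μ i).map (T i) = μ i) :
    (Measure.pi μ).map (fun x i => T i (x i)) = Measure.pi μ := by
  have : ∀ i, SigmaFinite ((μ i).map (T i)) := fun i => by rw [hμ i]; infer_instance
  rw [Measure.pi_map_pi fun i => (hT i).aemeasurable]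
  simp only [hμ]

lemma MeasureTheory.Measure.map_map_eq_self_of_semiconj {α β : Type*} [MeasurableSpace α]
    [MeasurableSpace β] {μ : Measure α} {f : α → β} {T : α → α} {T' : β → β} (hf : Measurable f)
    (hT : Measurable T) (hT' : Measurable T') (hμ : μ.map T = μ)
    (h : Function.Semiconj f T T') : (μ.map f).map T' = μ.map f := by
  rw [Measure.map_map hT' hf, ← h.comp_eq, ← Measure.map_map hf hT, hμ]

theorem averaged_quantized_flipInvariance_general
    {Ω : Type*} [MeasurableSpace Ω] (P : Measure Ω) [IsProbabilityMeasure P]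
    (N m' : ℕ)
    (W : Fin N → Ω → (Fin m' → ℝ)) (hmeas : ∀ i, Measurable (W i))
    (hindep : iIndepFun W P)
    (j : Fin m')
    (hflip : ∀ i, (P.map (W i)).map (flipCoord j) = P.map (W i))
    (q : Fin N → (Fin m' → ℝ) → (Fin m' → ℝ)) (hqmeas : ∀ i, Measurable (q i)) :
    (P.map (fun ω (k : Fin m') =>
        (N : ℝ)⁻¹ * ∑ i, Real.sign (W i ω k) * q i (fun l => |W i ω l|) k)).map
        (flipCoord j) =
      P.map (fun ω (k : Fin m') =>
        (N : ℝ)⁻¹ * ∑ i, Real.sign (W i ω k) * q i (fun l => |W i ω l|) k) := by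
  have hW : Measurable fun ω i => W i ω := measurable_pi_lambda _ hmeas
  have hjoint : (P.map fun ω i => W i ω).map (fun w i => flipCoord j (w i)) =
      P.map fun ω i => W i ω := by
    have : ∀ i, IsProbabilityMeasure (P.map (W i)) :=
      fun i => Measure.isProbabilityMeasure_map (hmeas i).aemeasurable
    rw [hindep.map_fun_eq_pi_map fun i => (hmeas i).aemeasurable]
    exact Measure.pi_map_pi_eq_self (fun _ => measurable_flipCoord j) hflip
  change (P.map (averageQuantizedSign q ∘ fun ω i => W i ω)).map (flipCoord j) =
    P.map (averageQuantizedSign q ∘ fun ω i => W i ω)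
  rw [← Measure.map_map (measurable_averageQuantizedSign hqmeas) hW]
  exact Measure.map_map_eq_self_of_semiconj (measurable_averageQuantizedSign hqmeas)
    (by fun_prop) (measurable_flipCoord j) hjoint (averageQuantizedSign_flipCoord j q)

/-- Averaging quantized statistics preserves sign-flip invariance: if the
independent random vectors `W^{(1)}, …, W^{(N)}` in `ℝ^{m'}` all have laws
invariant under `flip_j`, `q^{(i)}` are measurable quantizers, and
`W̄ = (1/N) Σ_i W_q^{(i)}` with `(W_q^{(i)})_k = sgn(W_k^{(i)})·q^{(i)}(|W^{(i)}|)_k`,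
then the law of `W̄` is invariant under `flip_j`. -/
theorem averaged_quantized_flipInvariance
    {Ω : Type*} [MeasurableSpace Ω] (P : Measure Ω) [IsProbabilityMeasure P]
    (N m' : ℕ) (hN : 0 < N)
    (W : Fin N → Ω → (Fin m' → ℝ)) (hmeas : ∀ i, Measurable (W i))
    (hindep : iIndepFun W P)
    (j : Fin m')
    (hflip : ∀ i, (P.map (W i)).map (flipCoord j) = P.map (W i))
    (q : Fin N → (Fin m' → ℝ) → (Fin m' → ℝ)) (hqmeas : ∀ i, Measurable (q i))
    (hq : ∀ i v k, 0 ≤ q i v k) :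
    (P.map (fun ω (k : Fin m') =>
        (N : ℝ)⁻¹ * ∑ i, Real.sign (W i ω k) * q i (fun l => |W i ω l|) k)).map
        (flipCoord j) =
      P.map (fun ω (k : Fin m') =>
        (N : ℝ)⁻¹ * ∑ i, Real.sign (W i ω k) * q i (fun l => |W i ω l|) k) :=
  averaged_quantized_flipInvariance_general P N m' W hmeas hindep j hflip q hqmeas
end
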